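/- arXiv:2412.05792 — 2 statements merged into one kernel-verified Lean document; each statement's English description precedes it below -/
import Mathlib

section
/- For any element w of the wreath product W_{r,n} and any nonnegative integer k, the character χ^n_k of the W_{r,n}-action on V^{⊗n} (where V = C^{k+1} ⊕ C^k ⊕ ··· ⊕ C^k with r summands, S_n permuting tensor factors and the generator s_0 scaling the first factor by ζ^{color}) equals (rk+1)^{ℓ_n(w)}, where ℓ_n(w) is the number of parts of the 0-th component of the cycle type of w. -/
/-- The color of the `v`-th basis vector of
`V = V⁽⁰⁾ ⊕ V⁽¹⁾ ⊕ ⋯ ⊕ V⁽ʳ⁻¹⁾` where `dim V⁽⁰⁾ = k+1` and `dim V⁽ⁱ⁾ = k`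
for `i ≥ 1` (basis vectors ordered color by color). -/
def colorOf (k : ℕ) (v : ℕ) : ℕ :=
  if v < k + 1 then 0 else (v - (k + 1)) / k + 1

/-- `ℓ_n(w)`: the number of parts of the `0`-th component of the cycle type of
`w = (σ, x) ∈ W_{r,n} = Z_r ≀ S_n`, i.e. the number of cycles of `σ`
(including fixed points) whose total color is `0` in `Z_r`. -/
def blockLen (r n : ℕ) (σ : Equiv.Perm (Fin n)) (x : Fin n → ZMod r) : ℕ :=
  (σ.cycleFactorsFinset.filter (fun c => (∑ i ∈ c.support, x i) = 0)).card +
    (Finset.univ.filter (fun i : Fin n => σ i = i ∧ x i = 0)).card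

/-!
A basis tensor `b` contributes to the trace only when `b ∘ σ = b`, i.e. when `b` is constant
on the cycles of `σ`; so the sum runs over functions on the set of cycles. The phase of such a
`b` factors over the cycles: a cycle `q` of total color `s_q` on which `b` takes the value `v`
contributes `ζ ^ (s_q · color v)`. Summing over `v` cycle by cycle, and using that `V⁽⁰⁾` has one
basis vector more than each other summand, the factor of `q` is `1 + k · ∑_{c < r} ζ ^ (s_q c)`,
which is `rk + 1` if `s_q = 0` and `1` otherwise (a full geometric sum of a nontrivial root
of unity vanishes).
-/

open Finset

namespace AddChar

variable {ι A R : Type*} [AddCommMonoid A] [CommMonoid R]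

lemma map_sum_eq_prod (ψ : AddChar A R) (s : Finset ι) (x : ι → A) :
    ψ (∑ i ∈ s, x i) = ∏ i ∈ s, ψ (x i) := by
  classical
  induction s using Finset.induction_on with
  | empty => simp
  | insert i s hi ih => rw [sum_insert hi, prod_insert hi, map_add_eq_mul, ih]

lemma prod_pow_comp_eq_prod_fiberwise {α κ : Type*} [Fintype α] [Fintype κ] [DecidableEq κ]
    (ψ : AddChar A R) (p : α → κ) (x : α → A) (e : κ → ℕ) :
    ∏ i, ψ (x i) ^ e (p i) = ∏ j, ψ (∑ i with p i = j, x i) ^ e j := by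
  rw [← prod_fiberwise univ p]
  refine prod_congr rfl fun j _ => ?_
  rw [map_sum_eq_prod, ← prod_pow]
  exact prod_congr rfl fun i hi => by rw [(mem_filter.1 hi).2]

end AddChar

lemma geom_sum_eq_zero_of_pow_eq_one {R : Type*} [CommRing R] [IsDomain R] {ω : R} {r : ℕ}
    (hω : ω ^ r = 1) (h1 : ω ≠ 1) : ∑ c ∈ range r, ω ^ c = 0 := by
  have h := geom_sum_mul ω r
  rw [hω, sub_self] at h
  exact (mul_eq_zero.1 h).resolve_right (sub_ne_zero.2 h1)

lemma IsPrimitiveRoot.pow_val_eq_one_iff {M : Type*} [CommMonoid M] {ζ : M} {r : ℕ} [NeZero r]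
    (hζ : IsPrimitiveRoot ζ r) (a : ZMod r) : ζ ^ a.val = 1 ↔ a = 0 := by
  rw [hζ.pow_eq_one_iff_dvd, ← ZMod.natCast_eq_zero_iff, ZMod.natCast_zmod_val]

lemma colorOf_zero (k : ℕ) : colorOf k 0 = 0 := rfl

lemma colorOf_succ {k m : ℕ} (hk : 0 < k) : colorOf k (m + 1) = m / k := by
  unfold colorOf
  rcases lt_or_ge m k with h | h
  · rw [if_pos (by omega), Nat.div_eq_of_lt h]
  · rw [if_neg (by omega), Nat.succ_sub_succ, ← Nat.div_eq_sub_div hk h]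

lemma sum_colorOf {M : Type*} [AddCommMonoid M] (r k : ℕ) (f : ℕ → M) :
    ∑ v : Fin (r * k + 1), f (colorOf k v) = f 0 + k • ∑ c ∈ range r, f c := by
  rw [Fin.sum_univ_succ, Fin.val_zero, colorOf_zero]
  congr 1
  calc ∑ j : Fin (r * k), f (colorOf k (j + 1))
      = ∑ j : Fin (r * k), f (j / k) := by
        refine Fintype.sum_congr _ _ fun j => ?_
        rw [colorOf_succ (Nat.pos_of_mul_pos_left (Nat.zero_lt_of_lt j.2))]
    _ = ∑ p : Fin r × Fin k, f p.1 := by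
        refine (Fintype.sum_equiv finProdFinEquiv _ _ fun p => ?_).symm
        rw [finProdFinEquiv_apply_val, Nat.add_mul_div_left _ _ (Nat.zero_lt_of_lt p.2.2),
          Nat.div_eq_of_lt p.2.2, zero_add]
    _ = k • ∑ c ∈ range r, f c := by
        rw [Fintype.sum_prod_type, Fin.sum_univ_eq_sum_range (fun c => ∑ _ : Fin k, f c)]
        simp only [sum_const, card_univ, Fintype.card_fin, ← smul_sum]

lemma sum_pow_colorOf {R : Type*} [CommRing R] [IsDomain R] [DecidableEq R] {r : ℕ} (k : ℕ)
    {ω : R} (hω : ω ^ r = 1) :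
    ∑ v : Fin (r * k + 1), ω ^ colorOf k v = if ω = 1 then (r * k + 1 : R) else 1 := by
  rw [sum_colorOf r k (ω ^ ·), pow_zero]
  split_ifs with h1
  · subst h1
    simp only [one_pow, sum_const, card_range, nsmul_eq_mul, mul_one]
    ring
  · rw [geom_sum_eq_zero_of_pow_eq_one hω h1, smul_zero, add_zero]

namespace Equiv.Perm

section Orbits

variable {α : Type*} (σ : Perm α)

abbrev Orbits : Type _ := Quotient (SameCycle.setoid σ)

variable {σ}

theorem SameCycle.apply_eq_apply_of_invariant {β : Type*} {b : α → β}
    (hb : ∀ i, b (σ i) = b i) {i j : α} (h : σ.SameCycle i j) : b i = b j := by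
  obtain ⟨m, rfl⟩ := h
  induction m using Int.induction_on generalizing i with
  | zero => rfl
  | succ m ih => rw [zpow_add_one, mul_apply, ← ih, hb]
  | pred m ih =>
    rw [zpow_sub_one, mul_apply, ← ih, ← hb (σ⁻¹ i), coe_inv, apply_symm_apply]

variable (σ) in
def invariantFunEquiv (β : Type*) : {b : α → β // ∀ i, b (σ i) = b i} ≃ (σ.Orbits → β) where
  toFun b := Quotient.lift b.1 fun _ _ => SameCycle.apply_eq_apply_of_invariant b.2
  invFun g := ⟨fun i => g (Quotient.mk _ i),
    fun i => congrArg g (Quotient.sound (sameCycle_apply_left.2 (SameCycle.refl σ i)))⟩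
  left_inv _ := rfl
  right_inv _ := funext fun q => Quotient.inductionOn q fun _ => rfl

end Orbits

section Fintype

variable {α : Type*} [Fintype α] [DecidableEq α] (σ : Perm α)

instance : DecidableEq σ.Orbits :=
  @Quotient.decidableEq _ _ fun i j => inferInstanceAs (Decidable (σ.SameCycle i j))

instance : Fintype σ.Orbits :=
  @Quotient.fintype _ _ _ fun i j => inferInstanceAs (Decidable (σ.SameCycle i j))

theorem sum_ite_invariant_eq_sum_orbits {β M : Type*} [Fintype β]
    [DecidablePred fun b : α → β => ∀ i, b (σ i) = b i] [AddCommMonoid M] (F : (α → β) → M) :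
    ∑ b : α → β, (if ∀ i, b (σ i) = b i then F b else 0) =
      ∑ g : σ.Orbits → β, F (fun i => g (Quotient.mk _ i)) := by
  rw [← sum_filter, sum_subtype _ (fun _ => mem_filter_univ _)]
  exact Fintype.sum_equiv (invariantFunEquiv σ β) _ _ fun _ => rfl

def orbitFinset (q : σ.Orbits) : Finset α := {i | Quotient.mk _ i = q}

def orbitCycle (q : σ.Orbits) : Perm α :=
  Quotient.lift σ.cycleOf (fun _ _ => SameCycle.cycleOf_eq) q

variable {σ}

theorem orbitCycle_mk_eq_one_iff {i : α} : σ.orbitCycle (Quotient.mk _ i) = 1 ↔ σ i = i :=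
  cycleOf_eq_one_iff σ

theorem orbitFinset_mk_of_apply_eq {i : α} (h : σ i = i) :
    σ.orbitFinset (Quotient.mk _ i) = {i} := by
  ext j
  simp only [orbitFinset, mem_filter_univ, mem_singleton]
  exact ⟨fun hj => ((Quotient.exact hj).symm.eq_of_left h).symm, fun hj => hj ▸ rfl⟩

theorem orbitFinset_mk_of_apply_ne {i : α} (h : σ i ≠ i) :
    σ.orbitFinset (Quotient.mk _ i) = (σ.cycleOf i).support := by
  ext j
  rw [mem_support_cycleOf_iff, mem_support, orbitFinset, mem_filter_univ]
  exact ⟨fun hj => ⟨(Quotient.exact hj).symm, h⟩, fun hj => Quotient.sound hj.1.symm⟩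

variable (σ) (P : Finset α → Prop) [DecidablePred P]

theorem card_filter_orbits_orbitCycle_ne_one :
    #{q : σ.Orbits | P (σ.orbitFinset q) ∧ σ.orbitCycle q ≠ 1} =
      #{c ∈ σ.cycleFactorsFinset | P c.support} := by
  refine card_nbij σ.orbitCycle ?_ ?_ ?_
  · intro q hq
    obtain ⟨i, rfl⟩ := Quotient.exists_rep q
    obtain ⟨hP, hi⟩ := (mem_filter_univ _).1 hq
    rw [Ne, orbitCycle_mk_eq_one_iff] at hi
    rw [orbitFinset_mk_of_apply_ne hi] at hP
    exact mem_filter.2 ⟨cycleOf_mem_cycleFactorsFinset_iff.2 (mem_support.2 hi), hP⟩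
  · intro q₁ _ q₂ hq₂ h
    obtain ⟨i, rfl⟩ := Quotient.exists_rep q₁
    obtain ⟨j, rfl⟩ := Quotient.exists_rep q₂
    have hj : σ j ≠ j := by simpa [orbitCycle_mk_eq_one_iff] using ((mem_filter_univ _).1 hq₂).2
    have hji : j ∈ (σ.cycleOf i).support := by
      rw [show σ.cycleOf i = σ.cycleOf j from h, mem_support_cycleOf_iff]
      exact ⟨SameCycle.refl σ j, mem_support.2 hj⟩
    exact Quotient.sound (mem_support_cycleOf_iff.1 hji).1
  · intro c hc
    obtain ⟨hc, hP⟩ := mem_filter.1 hc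
    obtain ⟨a, ha⟩ := (mem_cycleFactorsFinset_iff.1 hc).1.nonempty_support
    have hca : c = σ.cycleOf a := cycle_is_cycleOf ha hc
    have hσa : σ a ≠ a := mem_support.1 (mem_cycleFactorsFinset_support_le hc ha)
    refine ⟨Quotient.mk _ a, (mem_filter_univ _).2 ⟨?_, ?_⟩, hca.symm⟩
    · rwa [orbitFinset_mk_of_apply_ne hσa, ← hca]
    · rwa [Ne, orbitCycle_mk_eq_one_iff]

theorem card_filter_orbits_orbitCycle_eq_one :
    #{q : σ.Orbits | P (σ.orbitFinset q) ∧ σ.orbitCycle q = 1} = #{i | σ i = i ∧ P {i}} := by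
  refine (card_nbij (Quotient.mk _) ?_ ?_ ?_).symm
  · intro i hi
    obtain ⟨hσi, hP⟩ := (mem_filter_univ _).1 hi
    refine (mem_filter_univ _).2 ?_
    rw [orbitFinset_mk_of_apply_eq hσi, orbitCycle_mk_eq_one_iff]
    exact ⟨hP, hσi⟩
  · intro i hi j _ h
    exact (Quotient.exact h).eq_of_left ((mem_filter_univ _).1 hi).1
  · intro q hq
    obtain ⟨i, rfl⟩ := Quotient.exists_rep q
    obtain ⟨hP, hσi⟩ := (mem_filter_univ _).1 hq
    rw [orbitCycle_mk_eq_one_iff] at hσi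
    rw [orbitFinset_mk_of_apply_eq hσi] at hP
    exact ⟨i, (mem_filter_univ _).2 ⟨hσi, hP⟩, rfl⟩

theorem card_filter_orbits :
    #{q : σ.Orbits | P (σ.orbitFinset q)} =
      #{c ∈ σ.cycleFactorsFinset | P c.support} + #{i | σ i = i ∧ P {i}} := by
  rw [← card_filter_orbits_orbitCycle_ne_one, ← card_filter_orbits_orbitCycle_eq_one,
    ← card_filter_add_card_filter_not (s := {q : σ.Orbits | P (σ.orbitFinset q)})
      (fun q => σ.orbitCycle q ≠ 1)]
  simp only [filter_filter, not_not]

end Fintype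

end Equiv.Perm

open Equiv.Perm in
lemma blockLen_eq_card_filter_orbits (r n : ℕ) (σ : Equiv.Perm (Fin n)) (x : Fin n → ZMod r) :
    blockLen r n σ x = #{q : σ.Orbits | ∑ i ∈ σ.orbitFinset q, x i = 0} := by
  rw [card_filter_orbits σ (fun s => ∑ i ∈ s, x i = 0)]
  simp only [blockLen, sum_singleton]

/-- The character `χ^n_k` of the `W_{r,n}`-action on `V^{⊗n}` (where `S_n`
permutes the tensor factors and `s_0` scales by `ζ^{color}`) evaluated at
`w = (σ, x)` equals `(rk+1)^{ℓ_n(w)}`.  The left-hand side is the trace of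
`w` on `V^{⊗n}`, computed in the standard basis indexed by
`b : Fin n → Fin (rk+1)`: a basis vector is fixed (up to the phase
`∏ᵢ ζ^{xᵢ · color(bᵢ)}`) iff `b ∘ σ = b`. -/
theorem character_tensor_eq_pow_blockLen (r n k : ℕ) (hr : 0 < r)
    (ζ : ℂ) (hζ : IsPrimitiveRoot ζ r)
    (σ : Equiv.Perm (Fin n)) (x : Fin n → ZMod r) :
    (∑ b : Fin n → Fin (r * k + 1),
        if ∀ i, b (σ i) = b i then
          ∏ i, ζ ^ ((x i).val * colorOf k (b i : ℕ)) else 0) =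
      ((r : ℂ) * k + 1) ^ blockLen r n σ x := by
  have : NeZero r := ⟨hr.ne'⟩
  let ψ := AddChar.zmodChar r hζ.pow_eq_one
  have hψ (a : ZMod r) : ψ a ^ r = 1 := by
    rw [AddChar.zmodChar_apply, ← pow_mul, mul_comm, pow_mul, hζ.pow_eq_one, one_pow]
  calc _ = ∑ g : σ.Orbits → Fin (r * k + 1),
          ∏ i, ψ (x i) ^ colorOf k (g (Quotient.mk _ i)) := by
        rw [Equiv.Perm.sum_ite_invariant_eq_sum_orbits]
        simp only [pow_mul, ψ, AddChar.zmodChar_apply]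
    _ = ∑ g : σ.Orbits → Fin (r * k + 1),
          ∏ q, ψ (∑ i ∈ σ.orbitFinset q, x i) ^ colorOf k (g q) :=
        Fintype.sum_congr _ _ fun g =>
          ψ.prod_pow_comp_eq_prod_fiberwise (Quotient.mk _) x fun q => colorOf k (g q)
    _ = ∏ q, ∑ v : Fin (r * k + 1), ψ (∑ i ∈ σ.orbitFinset q, x i) ^ colorOf k v :=
        (Fintype.prod_sum fun q (v : Fin (r * k + 1)) =>
          ψ (∑ i ∈ σ.orbitFinset q, x i) ^ colorOf k v).symm
    _ = ∏ q, if ∑ i ∈ σ.orbitFinset q, x i = 0 then ((r : ℂ) * k + 1) else 1 := by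
        refine Fintype.prod_congr _ _ fun q => ?_
        rw [sum_pow_colorOf k (hψ _)]
        simp only [ψ, AddChar.zmodChar_apply, hζ.pow_val_eq_one_iff]
    _ = _ := by
        rw [prod_ite, prod_const_one, mul_one, prod_const, blockLen_eq_card_filter_orbits]
end

section
/- For every r-multipartition λ of n and every k, the number s_k(λ) of row-semistandard x_k-tableaux of shape λ satisfies s_k(λ) = Σ_{j=0}^{k} C(n+j, j) · m_{k-j}(λ), where m_i(λ) is the number of standard λ-tableaux with exactly i descents. -/
/-- An `r`-multipartition of `n`: an `r`-tuple of partitions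
`(λ⁽⁰⁾; …; λ⁽ʳ⁻¹⁾)` with `|λ⁽⁰⁾| + ⋯ + |λ⁽ʳ⁻¹⁾| = n`.  `part c a` is the
length of row `a` (`0`-indexed) of the `c`-th component. -/
structure MultiPartition (r n : ℕ) where
  part : Fin r → ℕ → ℕ
  antitone : ∀ c a, part c (a + 1) ≤ part c a
  vanish : ∀ c a, n ≤ a → part c a = 0
  size : (∑ c : Fin r, ∑ a ∈ Finset.range n, part c a) = n

/-- The boxes of (the Young diagram of) an `r`-multipartition:
triples (component, row, column), `0`-indexed. -/
def MultiPartition.Box {r n : ℕ} (Λ : MultiPartition r n) : Type :=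
  {x : Fin r × ℕ × ℕ // x.2.2 < Λ.part x.1 x.2.1}

/-- A standard `Λ`-tableau: a bijective filling of the boxes of `Λ` by the
entries `1, …, n` (here `Fin n`), strictly increasing along rows and down
columns within each component. -/
structure StdTableau {r n : ℕ} (Λ : MultiPartition r n) where
  entry : Λ.Box → Fin n
  bijective : Function.Bijective entry
  row_lt : ∀ x y : Λ.Box, x.1.1 = y.1.1 → x.1.2.1 = y.1.2.1 → x.1.2.2 < y.1.2.2 →
    entry x < entry y
  col_lt : ∀ x y : Λ.Box, x.1.1 = y.1.1 → x.1.2.2 = y.1.2.2 → x.1.2.1 < y.1.2.1 →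
    entry x < entry y

/-- `v ∈ {1, …, n}` is a descent of the standard tableau `T` if the entry
`v+1` lies in a strictly smaller component than `v`, or in the same component
and a strictly larger row (with the convention that the entry `n+1` lies in
component `0`, so that the last entry `n` is a descent iff its component is
positive). -/
def StdTableau.IsDescent {r n : ℕ} {Λ : MultiPartition r n}
    (T : StdTableau Λ) (v : Fin n) : Prop :=
  if h : (v : ℕ) + 1 < n then
    ∃ x y : Λ.Box, T.entry x = v ∧ T.entry y = ⟨(v : ℕ) + 1, h⟩ ∧
      ((y.1.1 : ℕ) < (x.1.1 : ℕ) ∨ (x.1.1 = y.1.1 ∧ x.1.2.1 < y.1.2.1))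
  else
    ∃ x : Λ.Box, T.entry x = v ∧ 0 < (x.1.1 : ℕ)

/-- `v ∈ {1, …, n}` is a column-descent of the standard tableau `T` if the
entry `v+1` lies in a strictly larger component than `v`, or in the same
component and a strictly larger column (with the convention on the fictional
entry `n+1` complementary to the one for descents: the last entry `n` is a
column-descent iff its component is `0`). -/
def StdTableau.IsCDescent {r n : ℕ} {Λ : MultiPartition r n}
    (T : StdTableau Λ) (v : Fin n) : Prop :=
  if h : (v : ℕ) + 1 < n then
    ∃ x y : Λ.Box, T.entry x = v ∧ T.entry y = ⟨(v : ℕ) + 1, h⟩ ∧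
      ((x.1.1 : ℕ) < (y.1.1 : ℕ) ∨ (x.1.1 = y.1.1 ∧ x.1.2.2 < y.1.2.2))
  else
    ∃ x : Λ.Box, T.entry x = v ∧ (x.1.1 : ℕ) = 0

/-- The number of descents of a standard tableau. -/
noncomputable def StdTableau.desCount {r n : ℕ} {Λ : MultiPartition r n}
    (T : StdTableau Λ) : ℕ :=
  Nat.card {v : Fin n // T.IsDescent v}

/-- The number of column-descents of a standard tableau. -/
noncomputable def StdTableau.cdesCount {r n : ℕ} {Λ : MultiPartition r n}
    (T : StdTableau Λ) : ℕ :=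
  Nat.card {v : Fin n // T.IsCDescent v}

/-- `m_k(Λ)`: the number of standard `Λ`-tableaux with exactly `k`
descents. -/
noncomputable def mCount {r n : ℕ} (Λ : MultiPartition r n) (k : ℕ) : ℕ :=
  Nat.card {T : StdTableau Λ // T.desCount = k}

/-- `m̄_k(Λ)`: the number of standard `Λ`-tableaux with exactly `k`
column-descents. -/
noncomputable def mbarCount {r n : ℕ} (Λ : MultiPartition r n) (k : ℕ) : ℕ :=
  Nat.card {T : StdTableau Λ // T.cdesCount = k}

/-- `s_k(Λ)`: the number of row-semistandard `x_k`-tableaux of shape `Λ`: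
the component `c` is filled with the variables of color `c` (there are `k+1`
variables of color `0` and `k` of every other color), weakly increasing along
rows and strictly increasing down columns. -/
noncomputable def sCount {r n : ℕ} (Λ : MultiPartition r n) (k : ℕ) : ℕ :=
  Nat.card {e : Λ.Box → ℕ //
    (∀ x : Λ.Box, e x < if (x.1.1 : ℕ) = 0 then k + 1 else k) ∧
    (∀ x y : Λ.Box, x.1.1 = y.1.1 → x.1.2.1 = y.1.2.1 → x.1.2.2 < y.1.2.2 →
      e x ≤ e y) ∧
    (∀ x y : Λ.Box, x.1.1 = y.1.1 → x.1.2.2 = y.1.2.2 → x.1.2.1 < y.1.2.1 →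
      e x < e y)}

/-- `c_k(Λ)`: the number of column-semistandard `x_k`-tableaux of shape `Λ`:
the component `c` is filled with the variables of color `c`, weakly increasing
down columns and strictly increasing along rows. -/
noncomputable def cCount {r n : ℕ} (Λ : MultiPartition r n) (k : ℕ) : ℕ :=
  Nat.card {e : Λ.Box → ℕ //
    (∀ x : Λ.Box, e x < if (x.1.1 : ℕ) = 0 then k + 1 else k) ∧
    (∀ x y : Λ.Box, x.1.1 = y.1.1 → x.1.2.2 = y.1.2.2 → x.1.2.1 < y.1.2.1 →
      e x ≤ e y) ∧
    (∀ x y : Λ.Box, x.1.1 = y.1.1 → x.1.2.1 = y.1.2.1 → x.1.2.2 < y.1.2.2 →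
      e x < e y)}

/-!
Standardization. Reading a row-semistandard filling `e` in the order "value, then component,
then column" numbers the boxes by a standard tableau `T`, and `e` is recovered from `T` and the
sequence `b` of the values carried by the entries `1, …, n` of `T`. The sequences that occur are
exactly those that weakly increase, strictly at each descent of `T`, and end at most at `k`
(strictly below `k` if `n` is a descent). Subtracting from `b i` the number of descents before `i`
and adding `i` turns them into the strictly increasing sequences with values below
`n + k - des T`, of which there are `C(n + k - des T, n)`; grouping the tableaux by their number
of descents gives the formula.
-/

open Finset

section CompatibleSequences

variable {n : ℕ}

def extendSeq (b : Fin n → ℕ) (k m : ℕ) : ℕ := if h : m < n then b ⟨m, h⟩ else k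

theorem extendSeq_of_lt (b : Fin n → ℕ) (k : ℕ) {m : ℕ} (h : m < n) :
    extendSeq b k m = b ⟨m, h⟩ := dif_pos h

theorem extendSeq_val (b : Fin n → ℕ) (k : ℕ) (i : Fin n) : extendSeq b k i = b i :=
  dif_pos i.2

theorem extendSeq_self (b : Fin n → ℕ) (k : ℕ) : extendSeq b k n = k := dif_neg (lt_irrefl n)

/-- For `δ` the indicator of the descents of a standard tableau, the appended value `k` plays the
role of the fictitious entry `n + 1` in the definition of descents. -/
def IsCompatible (δ : ℕ → ℕ) (k : ℕ) (b : Fin n → ℕ) : Prop :=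
  ∀ m < n, extendSeq b k m + δ m ≤ extendSeq b k (m + 1)

variable {δ : ℕ → ℕ} {k : ℕ} {b : Fin n → ℕ}

theorem IsCompatible.add_sum_Ico_le (hb : IsCompatible δ k b) {m m' : ℕ} (hmm' : m ≤ m')
    (hm' : m' ≤ n) : extendSeq b k m + ∑ j ∈ Ico m m', δ j ≤ extendSeq b k m' := by
  induction m', hmm' using Nat.le_induction with
  | base => simp
  | succ m' hmm' ih =>
    rw [sum_Ico_succ_top hmm', ← add_assoc]
    exact (Nat.add_le_add_right (ih (by omega)) _).trans (hb m' (by omega))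

theorem IsCompatible.sum_range_le (hb : IsCompatible δ k b) (i : Fin n) :
    ∑ j ∈ range i, δ j ≤ b i := by
  have := hb.add_sum_Ico_le (Nat.zero_le i) i.2.le
  rw [← range_eq_Ico, extendSeq_val] at this
  omega

theorem IsCompatible.extendSeq_mono (hb : IsCompatible δ k b) {m m' : ℕ} (hmm' : m ≤ m')
    (hm' : m' ≤ n) : extendSeq b k m ≤ extendSeq b k m' :=
  (Nat.le_add_right _ _).trans (hb.add_sum_Ico_le hmm' hm')

theorem IsCompatible.extendSeq_lt (hb : IsCompatible δ k b) {m j m' : ℕ} (hmj : m ≤ j)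
    (hjm' : j < m') (hm' : m' ≤ n) (hδ : 0 < δ j) : extendSeq b k m < extendSeq b k m' := by
  have : δ j ≤ ∑ i ∈ Ico m m', δ i :=
    single_le_sum (fun _ _ ↦ Nat.zero_le _) (mem_Ico.2 ⟨hmj, hjm'⟩)
  have := hb.add_sum_Ico_le (hmj.trans hjm'.le) hm'
  omega

theorem IsCompatible.apply_le (hb : IsCompatible δ k b) (i : Fin n) : b i ≤ k := by
  simpa only [extendSeq_val, extendSeq_self] using hb.extendSeq_mono i.2.le le_rfl

instance : Finite {b : Fin n → ℕ // IsCompatible δ k b} :=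
  Finite.of_injective (fun b i ↦ (⟨b.1 i, Nat.lt_succ_of_le (b.2.apply_le i)⟩ : Fin (k + 1)))
    fun _ _ h ↦ Subtype.ext (funext fun i ↦ congrArg Fin.val (congrFun h i))

def shiftSeq (δ δ' : ℕ → ℕ) (b : Fin n → ℕ) (i : Fin n) : ℕ :=
  b i + ∑ j ∈ range i, δ' j - ∑ j ∈ range i, δ j

theorem IsCompatible.isCompatible_shiftSeq {δ' : ℕ → ℕ} {k' : ℕ} (hb : IsCompatible δ k b)
    (hk : k + ∑ j ∈ range n, δ' j = k' + ∑ j ∈ range n, δ j) :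
    IsCompatible δ' k' (shiftSeq δ δ' b) := by
  intro m hm
  have hle : ∑ j ∈ range m, δ j ≤ b ⟨m, hm⟩ := hb.sum_range_le ⟨m, hm⟩
  have hstep := hb m hm
  rw [extendSeq_of_lt _ _ hm] at hstep ⊢
  rcases Nat.lt_or_ge (m + 1) n with hm1 | hm1
  · rw [extendSeq_of_lt _ _ hm1] at hstep ⊢
    simp only [shiftSeq, sum_range_succ]
    omega
  · obtain rfl : n = m + 1 := by omega
    rw [extendSeq_self] at hstep ⊢
    simp only [shiftSeq, sum_range_succ] at hk ⊢
    omega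

theorem IsCompatible.shiftSeq_shiftSeq {δ' : ℕ → ℕ} (hb : IsCompatible δ k b) :
    shiftSeq δ' δ (shiftSeq δ δ' b) = b := by
  funext i
  have := hb.sum_range_le i
  simp only [_root_.shiftSeq]
  omega

def compatibleShiftEquiv (δ δ' : ℕ → ℕ) {k k' : ℕ}
    (hk : k + ∑ j ∈ range n, δ' j = k' + ∑ j ∈ range n, δ j) :
    {b : Fin n → ℕ // IsCompatible δ k b} ≃ {b : Fin n → ℕ // IsCompatible δ' k' b} where
  toFun b := ⟨shiftSeq δ δ' b, IsCompatible.isCompatible_shiftSeq b.2 hk⟩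
  invFun b := ⟨shiftSeq δ' δ b, IsCompatible.isCompatible_shiftSeq b.2 hk.symm⟩
  left_inv b := Subtype.ext (IsCompatible.shiftSeq_shiftSeq b.2)
  right_inv b := Subtype.ext (IsCompatible.shiftSeq_shiftSeq b.2)

theorem IsCompatible.add_sub_le (hb : IsCompatible (fun _ ↦ 1) k b) {i : Fin n} {m : ℕ}
    (him : i ≤ m) (hm : m ≤ n) : b i + (m - i) ≤ extendSeq b k m := by
  simpa [extendSeq_val] using hb.add_sum_Ico_le him hm

def compatibleOneEquiv (N : ℕ) :
    {b : Fin n → ℕ // IsCompatible (fun _ ↦ 1) N b} ≃ (Fin n ↪o Fin N) where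
  toFun b := OrderEmbedding.ofStrictMono
    (fun i ↦ ⟨b.1 i, by
      have := IsCompatible.add_sub_le b.2 i.2.le le_rfl
      rw [extendSeq_self] at this
      omega⟩)
    (fun i j hij ↦ by
      have := IsCompatible.add_sub_le b.2 (m := j) hij.le j.2.le
      rw [extendSeq_val] at this
      exact Fin.mk_lt_mk.2 (by simp only [Fin.lt_def] at hij; omega))
  invFun g := ⟨fun i ↦ g i, fun m hm ↦ by
    rw [extendSeq_of_lt _ _ hm]
    rcases Nat.lt_or_ge (m + 1) n with hm1 | hm1
    · rw [extendSeq_of_lt _ _ hm1]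
      exact g.strictMono (Fin.mk_lt_mk.2 (Nat.lt_succ_self m))
    · rw [show m + 1 = n by omega, extendSeq_self]
      exact (g ⟨m, hm⟩).2⟩
  left_inv b := rfl
  right_inv g := by ext; rfl

theorem card_compatible (hδ : ∑ j ∈ range n, δ j ≤ n + k) :
    Nat.card {b : Fin n → ℕ // IsCompatible δ k b} = (n + k - ∑ j ∈ range n, δ j).choose n := by
  have hk : k + ∑ j ∈ range n, (fun _ ↦ 1) j =
      (n + k - ∑ j ∈ range n, δ j) + ∑ j ∈ range n, δ j := by
    simp only [sum_const, card_range, smul_eq_mul, mul_one]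
    omega
  rw [Nat.card_congr ((compatibleShiftEquiv δ _ hk).trans (compatibleOneEquiv _)),
    Nat.card_congr Set.powersetCard.ofFinEmbEquiv, Set.powersetCard.card, Nat.card_fin]

end CompatibleSequences

section KeyRank

variable {α β : Type*} [Fintype α] [LinearOrder β]

def keyRank (f : α → β) (x : α) : ℕ := #{y | f y < f x}

variable {f : α → β}

theorem keyRank_lt_keyRank {x y : α} (h : f x < f y) : keyRank f x < keyRank f y := by
  refine card_lt_card ((ssubset_iff_of_subset fun z hz ↦ ?_).2 ⟨x, ?_, ?_⟩)
  · simp only [mem_filter, mem_univ, true_and] at hz ⊢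
    exact hz.trans h
  · simpa using h
  · simp

theorem keyRank_lt_card (f : α → β) (x : α) : keyRank f x < Fintype.card α :=
  card_lt_card (filter_ssubset.2 ⟨x, mem_univ x, lt_irrefl _⟩)

theorem keyRank_lt_keyRank_iff (hf : Function.Injective f) {x y : α} :
    keyRank f x < keyRank f y ↔ f x < f y := by
  refine ⟨fun h ↦ ?_, keyRank_lt_keyRank⟩
  rcases lt_trichotomy (f x) (f y) with hxy | hxy | hxy
  · exact hxy
  · exact absurd h (by rw [hf hxy]; exact lt_irrefl _)
  · exact absurd h (keyRank_lt_keyRank hxy).not_gt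

theorem keyRank_injective (hf : Function.Injective f) : Function.Injective (keyRank f) := by
  intro x y h
  apply hf
  by_contra hne
  rcases lt_or_gt_of_ne hne with hxy | hxy
  · exact (keyRank_lt_keyRank hxy).ne h
  · exact (keyRank_lt_keyRank hxy).ne' h

theorem keyRank_eq_of_lt_iff_lt {m : ℕ} (g : α ≃ Fin m) (h : ∀ x y, f x < f y ↔ g x < g y)
    (x : α) : keyRank f x = g x := by
  rw [keyRank, filter_congr fun y _ ↦ h y x, ← Fin.card_Iio]
  exact card_equiv g fun y ↦ by simp

end KeyRank

theorem le_of_forall_le_succ {α : Type*} [Preorder α] {f : ℕ → α} {m m' : ℕ} (hmm' : m ≤ m')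
    (h : ∀ j, m ≤ j → j < m' → f j ≤ f (j + 1)) : f m ≤ f m' := by
  induction m', hmm' using Nat.le_induction with
  | base => exact le_rfl
  | succ j hmj ih => exact (ih fun i hi hij ↦ h i hi (by omega)).trans (h j hmj (by omega))

namespace MultiPartition

variable {r n : ℕ} {Λ : MultiPartition r n}

instance : DecidableEq Λ.Box :=
  inferInstanceAs (DecidableEq {x : Fin r × ℕ × ℕ // x.2.2 < Λ.part x.1 x.2.1})

abbrev Box.comp (x : Λ.Box) : Fin r := x.1.1

abbrev Box.row (x : Λ.Box) : ℕ := x.1.2.1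

abbrev Box.col (x : Λ.Box) : ℕ := x.1.2.2

theorem Box.col_lt (x : Λ.Box) : x.col < Λ.part x.comp x.row := x.2

theorem Box.ext {x y : Λ.Box} (hc : x.comp = y.comp) (hr : x.row = y.row)
    (hcol : x.col = y.col) : x = y :=
  Subtype.ext (Prod.ext hc (Prod.ext hr hcol))

theorem Box.row_lt (x : Λ.Box) : x.row < n := by
  by_contra h
  have := Λ.vanish x.comp x.row (not_lt.1 h)
  have := x.col_lt
  omega

def Box.corner (x y : Λ.Box) (h : x.col ≤ y.col) : Λ.Box :=
  ⟨(y.comp, y.row, x.col), lt_of_le_of_lt h y.col_lt⟩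

variable (Λ) in
def boxEquivSigma : Λ.Box ≃ Σ c : Fin r, Σ a : Fin n, Fin (Λ.part c a) where
  toFun x := ⟨x.comp, ⟨x.row, x.row_lt⟩, ⟨x.col, x.col_lt⟩⟩
  invFun p := ⟨(p.1, p.2.1, p.2.2), p.2.2.2⟩
  left_inv _ := rfl
  right_inv _ := rfl

instance : Fintype Λ.Box := Fintype.ofEquiv _ (boxEquivSigma Λ).symm

variable (Λ) in
theorem card_box : Fintype.card Λ.Box = n := by
  rw [Fintype.card_congr (boxEquivSigma Λ)]
  simp only [Fintype.card_sigma, Fintype.card_fin]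
  simp_rw [Fin.sum_univ_eq_sum_range (Λ.part _)]
  exact Λ.size

end MultiPartition

namespace StdTableau

open MultiPartition OrderDual

variable {r n : ℕ} {Λ : MultiPartition r n}

theorem entry_injective : Function.Injective (entry : StdTableau Λ → Λ.Box → Fin n) := by
  rintro ⟨_⟩ ⟨_⟩ rfl
  rfl

noncomputable instance : Fintype (StdTableau Λ) := Fintype.ofInjective _ entry_injective

variable (T : StdTableau Λ)

noncomputable def equiv : Λ.Box ≃ Fin n := Equiv.ofBijective _ T.bijective

@[simp] theorem entry_equiv_symm (v : Fin n) : T.entry (T.equiv.symm v) = v :=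
  T.equiv.apply_symm_apply v

@[simp] theorem equiv_symm_entry (x : Λ.Box) : T.equiv.symm (T.entry x) = x :=
  T.equiv.symm_apply_apply x

theorem entry_le_of_row_le_of_col_le {x y : Λ.Box} (hc : y.comp = x.comp) (hr : y.row ≤ x.row)
    (hcol : y.col ≤ x.col) : T.entry y ≤ T.entry x := by
  let z := y.corner x hcol
  have hyz : T.entry y ≤ T.entry z := by
    rcases hr.lt_or_eq with hr | hr
    · exact (T.col_lt y z hc rfl hr).le
    · exact (congrArg T.entry (Box.ext (y := z) hc hr rfl)).le
  have hzx : T.entry z ≤ T.entry x := by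
    rcases hcol.lt_or_eq with hcol | hcol
    · exact (T.row_lt z x rfl rfl hcol).le
    · exact (congrArg T.entry (Box.ext (x := z) (y := x) rfl rfl hcol)).le
  exact hyz.trans hzx

/-- Position of the entry `m` in the order *component, then row from the bottom up*; the
fictitious entry `n` comes after every box of component `0`. The descents are exactly the
steps where this position drops. -/
noncomputable def readPos (m : ℕ) : ℕ ×ₗ ℕᵒᵈ :=
  if h : m < n then toLex (((T.equiv.symm ⟨m, h⟩).comp : ℕ), toDual (T.equiv.symm ⟨m, h⟩).row)
  else toLex (0, toDual 0)

theorem readPos_of_lt {m : ℕ} (h : m < n) :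
    T.readPos m = toLex (((T.equiv.symm ⟨m, h⟩).comp : ℕ), toDual (T.equiv.symm ⟨m, h⟩).row) :=
  dif_pos h

theorem readPos_of_le {m : ℕ} (h : n ≤ m) : T.readPos m = toLex (0, toDual 0) :=
  dif_neg (not_lt.2 h)

theorem readPos_entry (x : Λ.Box) :
    T.readPos (T.entry x) = toLex ((x.comp : ℕ), toDual x.row) := by
  rw [T.readPos_of_lt (T.entry x).2, Fin.eta, equiv_symm_entry]

theorem isDescent_iff_readPos_lt (v : Fin n) :
    T.IsDescent v ↔ T.readPos (v + 1) < T.readPos v := by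
  rw [IsDescent, T.readPos_of_lt v.2]
  split_ifs with h
  · rw [T.readPos_of_lt h, Prod.Lex.toLex_lt_toLex]
    simp only [toDual_lt_toDual, Fin.val_inj, Fin.eta]
    constructor
    · rintro ⟨x, y, rfl, hy, hxy⟩
      rw [← hy]
      simpa [eq_comm] using hxy
    · exact fun h' ↦
        ⟨_, _, T.entry_equiv_symm v, T.entry_equiv_symm _, by simpa [eq_comm] using h'⟩
  · rw [T.readPos_of_le (not_lt.1 h), Prod.Lex.toLex_lt_toLex]
    simp only [toDual_lt_toDual, Nat.not_lt_zero, and_false, or_false, Fin.eta]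
    constructor
    · rintro ⟨x, rfl, hx⟩
      simpa using hx
    · exact fun h' ↦ ⟨_, T.entry_equiv_symm v, h'⟩

theorem readPos_le_of_forall_not_isDescent {m m' : ℕ} (hmm' : m ≤ m')
    (h : ∀ v : Fin n, m ≤ v → (v : ℕ) < m' → ¬ T.IsDescent v) :
    T.readPos m ≤ T.readPos m' := by
  refine le_of_forall_le_succ hmm' fun j hmj hjm' ↦ ?_
  rcases Nat.lt_or_ge j n with hj | hj
  · simpa [T.isDescent_iff_readPos_lt ⟨j, hj⟩] using h ⟨j, hj⟩ hmj hjm'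
  · rw [T.readPos_of_le hj, T.readPos_of_le (by omega)]

theorem exists_isDescent_of_comp_pos {x : Λ.Box} (hx : 0 < (x.comp : ℕ)) :
    ∃ v : Fin n, T.entry x ≤ v ∧ T.IsDescent v := by
  by_contra! h
  have := T.readPos_le_of_forall_not_isDescent (T.entry x).2.le fun v hv _ ↦ h v hv
  rw [T.readPos_entry, T.readPos_of_le le_rfl, Prod.Lex.toLex_le_toLex] at this
  omega

theorem exists_isDescent_of_row_lt {x y : Λ.Box} (hc : x.comp = y.comp) (hr : x.row < y.row)
    (he : T.entry x < T.entry y) :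
    ∃ v : Fin n, T.entry x ≤ v ∧ v < T.entry y ∧ T.IsDescent v := by
  by_contra! h
  have := T.readPos_le_of_forall_not_isDescent he.le fun v hv hvy ↦ h v hv hvy
  rw [T.readPos_entry, T.readPos_entry, Prod.Lex.toLex_le_toLex, hc] at this
  simp only [lt_self_iff_false, true_and, false_or, toDual_le_toDual] at this
  omega

open Classical in
noncomputable def descentInd (m : ℕ) : ℕ :=
  if h : m < n then if T.IsDescent ⟨m, h⟩ then 1 else 0 else 0

theorem descentInd_pos_iff (v : Fin n) : 0 < T.descentInd v ↔ T.IsDescent v := by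
  rw [descentInd, dif_pos v.2]
  split_ifs with h <;> simpa using h

theorem sum_descentInd : ∑ m ∈ range n, T.descentInd m = T.desCount := by
  classical
  rw [desCount, Nat.card_eq_fintype_card, Fintype.card_subtype, card_filter,
    ← Fin.sum_univ_eq_sum_range]
  simp [descentInd]

theorem desCount_le : T.desCount ≤ n := by
  simpa [desCount] using Finite.card_subtype_le T.IsDescent

end StdTableau

namespace MultiPartition

variable {r n : ℕ} (Λ : MultiPartition r n)

def IsRowSemistandard (k : ℕ) (e : Λ.Box → ℕ) : Prop :=
  (∀ x : Λ.Box, e x < if (x.1.1 : ℕ) = 0 then k + 1 else k) ∧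
  (∀ x y : Λ.Box, x.1.1 = y.1.1 → x.1.2.1 = y.1.2.1 → x.1.2.2 < y.1.2.2 → e x ≤ e y) ∧
  (∀ x y : Λ.Box, x.1.1 = y.1.1 → x.1.2.2 = y.1.2.2 → x.1.2.1 < y.1.2.1 → e x < e y)

def stdKey (e : Λ.Box → ℕ) (x : Λ.Box) : ℕ ×ₗ ℕ ×ₗ ℕ :=
  toLex (e x, toLex ((x.comp : ℕ), x.col))

variable {Λ} {k : ℕ} {e : Λ.Box → ℕ}

theorem stdKey_lt_stdKey {x y : Λ.Box} :
    Λ.stdKey e x < Λ.stdKey e y ↔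
      e x < e y ∨
        e x = e y ∧ ((x.comp : ℕ) < y.comp ∨ (x.comp : ℕ) = y.comp ∧ x.col < y.col) := by
  simp only [stdKey, Prod.Lex.toLex_lt_toLex]

theorem IsRowSemistandard.lt_of_row_lt (he : Λ.IsRowSemistandard k e) {x y : Λ.Box}
    (hc : x.comp = y.comp) (hr : x.row < y.row) (hcol : x.col ≤ y.col) : e x < e y := by
  let z := x.corner y hcol
  have hxz : e x < e z := he.2.2 x z hc rfl hr
  have hzy : e z ≤ e y := by
    rcases hcol.lt_or_eq with hcol | hcol
    · exact he.2.1 z y rfl rfl hcol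
    · exact (congrArg e (Box.ext (x := z) (y := y) rfl rfl hcol)).le
  exact hxz.trans_le hzy

theorem IsRowSemistandard.stdKey_injective (he : Λ.IsRowSemistandard k e) :
    Function.Injective (Λ.stdKey e) := by
  intro x y hxy
  simp only [stdKey, toLex_inj, Prod.mk.injEq, Fin.val_inj] at hxy
  obtain ⟨hv, hc, hcol⟩ := hxy
  rcases lt_trichotomy x.row y.row with hr | hr | hr
  · exact absurd hv (he.2.2 x y hc hcol hr).ne
  · exact Box.ext hc hr hcol
  · exact absurd hv (he.2.2 y x hc.symm hcol.symm hr).ne'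

noncomputable def standardize (he : Λ.IsRowSemistandard k e) : StdTableau Λ where
  entry x := ⟨keyRank (Λ.stdKey e) x, (keyRank_lt_card _ x).trans_eq Λ.card_box⟩
  bijective := by
    refine (Fintype.bijective_iff_injective_and_card _).2 ⟨fun x y hxy ↦ ?_, by simp [card_box]⟩
    exact keyRank_injective he.stdKey_injective (Fin.mk.inj hxy)
  row_lt x y hc hr hcol := by
    refine Fin.mk_lt_mk.2 (keyRank_lt_keyRank (stdKey_lt_stdKey.2 ?_))
    rcases (he.2.1 x y hc hr hcol).lt_or_eq with hv | hv
    · exact Or.inl hv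
    · exact Or.inr ⟨hv, Or.inr ⟨congrArg Fin.val hc, hcol⟩⟩
  col_lt x y hc hcol hr := Fin.mk_lt_mk.2 (keyRank_lt_keyRank (stdKey_lt_stdKey.2
    (Or.inl (he.2.2 x y hc hcol hr))))

theorem standardize_entry_lt_iff (he : Λ.IsRowSemistandard k e) {x y : Λ.Box} :
    (standardize he).entry x < (standardize he).entry y ↔ Λ.stdKey e x < Λ.stdKey e y :=
  Fin.lt_def.trans (keyRank_lt_keyRank_iff he.stdKey_injective)

end MultiPartition

namespace StdTableau

open MultiPartition OrderDual

variable {r n : ℕ} {Λ : MultiPartition r n} {T : StdTableau Λ} {k : ℕ} {b : Fin n → ℕ}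

theorem isRowSemistandard_comp (hb : IsCompatible T.descentInd k b) :
    Λ.IsRowSemistandard k (b ∘ T.entry) := by
  refine ⟨fun x ↦ ?_, fun x y hc hr hcol ↦ ?_, fun x y hc hcol hr ↦ ?_⟩
  · split_ifs with h
    · exact Nat.lt_succ_of_le (hb.apply_le _)
    · obtain ⟨v, hxv, hv⟩ := T.exists_isDescent_of_comp_pos (Nat.pos_of_ne_zero h)
      have := hb.extendSeq_lt hxv v.2 le_rfl ((T.descentInd_pos_iff v).2 hv)
      rwa [extendSeq_val, extendSeq_self] at this
  · have := hb.extendSeq_mono (T.row_lt x y hc hr hcol).le (T.entry y).2.le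
    rwa [extendSeq_val, extendSeq_val] at this
  · obtain ⟨v, hxv, hvy, hv⟩ := T.exists_isDescent_of_row_lt hc hr (T.col_lt x y hc hcol hr)
    have := hb.extendSeq_lt hxv hvy (T.entry y).2.le ((T.descentInd_pos_iff v).2 hv)
    rwa [extendSeq_val, extendSeq_val] at this

theorem stdKey_lt_of_entry_lt (hb : IsCompatible T.descentInd k b) {x y : Λ.Box}
    (hxy : T.entry x < T.entry y) : Λ.stdKey (b ∘ T.entry) x < Λ.stdKey (b ∘ T.entry) y := by
  have hle := hb.extendSeq_mono hxy.le (T.entry y).2.le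
  rw [extendSeq_val, extendSeq_val] at hle
  rw [stdKey_lt_stdKey]
  rcases hle.lt_or_eq with hlt | heq
  · exact Or.inl hlt
  refine Or.inr ⟨heq, ?_⟩
  have hpos := T.readPos_le_of_forall_not_isDescent hxy.le fun v hxv hvy hv ↦
    (hb.extendSeq_lt hxv hvy (T.entry y).2.le ((T.descentInd_pos_iff v).2 hv)).ne
      (by rw [extendSeq_val, extendSeq_val]; exact heq)
  rw [T.readPos_entry, T.readPos_entry, Prod.Lex.toLex_le_toLex, toDual_le_toDual] at hpos
  refine hpos.imp_right fun ⟨hc, hr⟩ ↦ ⟨hc, not_le.1 fun hcol ↦ ?_⟩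
  exact (T.entry_le_of_row_le_of_col_le (Fin.val_injective hc).symm hr hcol).not_gt hxy

theorem standardize_comp (hb : IsCompatible T.descentInd k b) :
    standardize (isRowSemistandard_comp hb) = T := by
  refine entry_injective (funext fun x ↦
    Fin.ext (keyRank_eq_of_lt_iff_lt T.equiv (fun x y ↦ ?_) x))
  refine ⟨fun h ↦ ?_, stdKey_lt_of_entry_lt hb⟩
  rcases lt_trichotomy (T.entry x) (T.entry y) with hxy | hxy | hxy
  · exact hxy
  · exact absurd h (by rw [T.bijective.1 hxy]; exact lt_irrefl _)
  · exact absurd h (stdKey_lt_of_entry_lt hb hxy).not_gt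

end StdTableau

namespace MultiPartition

open StdTableau OrderDual

variable {r n : ℕ} {Λ : MultiPartition r n} {k : ℕ} {e : Λ.Box → ℕ}

theorem isCompatible_standardize (he : Λ.IsRowSemistandard k e) :
    IsCompatible (standardize he).descentInd k (e ∘ (standardize he).equiv.symm) := by
  set T := standardize he
  intro m hm
  have hdesc := T.isDescent_iff_readPos_lt ⟨m, hm⟩
  rw [extendSeq_of_lt _ _ hm, descentInd, dif_pos hm, Function.comp_apply]
  rw [T.readPos_of_lt hm] at hdesc
  rcases Nat.lt_or_ge (m + 1) n with hm1 | hm1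
  · have hxy := (standardize_entry_lt_iff he).1 (show T.entry (T.equiv.symm ⟨m, hm⟩) <
      T.entry (T.equiv.symm ⟨m + 1, hm1⟩) by simp only [entry_equiv_symm, Fin.mk_lt_mk]; omega)
    rw [T.readPos_of_lt hm1, Prod.Lex.toLex_lt_toLex, toDual_lt_toDual] at hdesc
    rw [extendSeq_of_lt _ _ hm1, Function.comp_apply]
    rw [stdKey_lt_stdKey] at hxy
    set x := T.equiv.symm ⟨m, hm⟩
    set y := T.equiv.symm ⟨m + 1, hm1⟩
    split_ifs with hd
    · rcases hxy with hlt | ⟨heq, hc⟩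
      · exact hlt
      · exfalso
        rcases hdesc.1 hd with hc' | ⟨hc', hr⟩
        · omega
        · have hcol : x.col < y.col := by omega
          exact (he.lt_of_row_lt (Fin.val_injective hc'.symm) hr hcol.le).ne heq
    · rcases hxy with hlt | ⟨heq, -⟩
      · exact hlt.le
      · exact heq.le
  · rw [show m + 1 = n by omega, extendSeq_self]
    rw [T.readPos_of_le hm1, Prod.Lex.toLex_lt_toLex, toDual_lt_toDual] at hdesc
    have hbound := he.1 (T.equiv.symm ⟨m, hm⟩)
    split_ifs at hbound ⊢ with hd h0
    · exact absurd hd (by simpa [h0] using hdesc)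
    · simpa using hbound
    · exact Nat.le_of_lt_succ hbound
    · exact hbound.le

variable (Λ k) in
theorem sCount_eq_card_sigma :
    sCount Λ k =
      Nat.card (Σ T : StdTableau Λ, {b : Fin n → ℕ // IsCompatible T.descentInd k b}) := by
  refine (Nat.card_eq_of_bijective (fun p ↦ ⟨p.2.1 ∘ p.1.entry, isRowSemistandard_comp p.2.2⟩)
    ⟨?_, ?_⟩).symm
  · rintro ⟨T₁, b₁, hb₁⟩ ⟨T₂, b₂, hb₂⟩ h
    have he : b₁ ∘ T₁.entry = b₂ ∘ T₂.entry := congrArg Subtype.val h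
    obtain rfl : T₁ = T₂ := by
      rw [← standardize_comp hb₁, ← standardize_comp hb₂]
      congr 1
    obtain rfl : b₁ = b₂ := funext fun v ↦ by simpa using congrFun he (T₁.equiv.symm v)
    rfl
  · rintro ⟨e, he⟩
    exact ⟨⟨standardize he, _, isCompatible_standardize he⟩,
      Subtype.ext (funext fun x ↦ by simp)⟩

end MultiPartition

theorem sum_choose_sub_eq_sum_choose_mul_card {α : Type*} [Fintype α] {n : ℕ} (d : α → ℕ)
    (hd : ∀ a, d a ≤ n) (k : ℕ) :
    ∑ a, (n + k - d a).choose n =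
      ∑ j ∈ range (k + 1), (n + j).choose j * #{a | d a = k - j} := by
  have hterm : ∀ a, (n + k - d a).choose n =
      ∑ j ∈ range (k + 1), if d a = k - j then (n + j).choose j else 0 := by
    intro a
    by_cases ha : d a ≤ k
    · have hcond : ∀ j ∈ range (k + 1), (if d a = k - j then (n + j).choose j else 0) =
          if k - d a = j then (n + j).choose j else 0 :=
        fun j hj ↦ if_congr (by have := mem_range.1 hj; omega) rfl rfl
      rw [sum_congr rfl hcond, sum_ite_eq, if_pos (mem_range.2 (by omega)),
        show n + k - d a = n + (k - d a) by omega, Nat.choose_symm_add]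
    · rw [Nat.choose_eq_zero_of_lt (by have := hd a; omega), eq_comm]
      exact sum_eq_zero fun j hj ↦ if_neg (by omega)
  simp_rw [hterm]
  rw [sum_comm]
  refine sum_congr rfl fun j _ ↦ ?_
  rw [sum_ite, sum_const_zero, add_zero, sum_const, smul_eq_mul, mul_comm]

/-- For every `r`-multipartition `Λ` of `n`,
`s_k(Λ) = ∑_{j=0}^{k} C(n+j, j) · m_{k-j}(Λ)`. -/
theorem sCount_eq_sum_choose_mul_mCount {r n : ℕ} (Λ : MultiPartition r n)
    (k : ℕ) :
    sCount Λ k = ∑ j ∈ Finset.range (k + 1),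
      (n + j).choose j * mCount Λ (k - j) := by
  have hcompat (T : StdTableau Λ) :
      Nat.card {b : Fin n → ℕ // IsCompatible T.descentInd k b} =
        (n + k - T.desCount).choose n := by
    have hδ : ∑ m ∈ range n, T.descentInd m ≤ n + k := by
      rw [T.sum_descentInd]
      exact T.desCount_le.trans (Nat.le_add_right n k)
    rw [card_compatible hδ, T.sum_descentInd]
  have hm (i : ℕ) : mCount Λ i = #{T : StdTableau Λ | T.desCount = i} := by
    rw [mCount, Nat.card_eq_fintype_card, Fintype.card_subtype]
  rw [Λ.sCount_eq_card_sigma k, Nat.card_sigma]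
  simp_rw [hcompat, hm]
  exact sum_choose_sub_eq_sum_choose_mul_card _ (fun T ↦ T.desCount_le) k
end
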